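/- arXiv:0809.3884 — 4 statements merged into one kernel-verified Lean document; each statement's English description precedes it below -/
import Mathlib

section
/- Let p ∈ ℝ and q ≥ 0, and define for t ≥ 0: a(t) = p (1+t)^{-2} (p + q − 2 − q t)/(1+qt) and b(t) = (2p(1+t)^{-1} − p² t (1+t)^{-2} + q)/(1+qt). If a(t)·s + b(t) = 0 for every t ≥ 0 and every s with 0 ≤ s ≤ t (in particular for s = 0 with all t, and for s = t = 1), then p = 0 and q = 0. -/
theorem stmt_1 (p q : ℝ) (hq : 0 ≤ q)
    (a : ℝ → ℝ) (b : ℝ → ℝ)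
    (ha : ∀ t, a t = p * (1 / (1 + t) ^ 2) * (p + q - 2 - q * t) / (1 + q * t))
    (hb : ∀ t, b t = (2 * p * (1 / (1 + t)) - p ^ 2 * t * (1 / (1 + t) ^ 2) + q) / (1 + q * t))
    (h : ∀ t, 0 ≤ t → ∀ s, 0 ≤ s → s ≤ t → a t * s + b t = 0) :
    p = 0 ∧ q = 0 := by
  have h0 := h 0 le_rfl 0 le_rfl le_rfl
  rw [ha, hb] at h0
  norm_num at h0
  -- h0 : 2 * p + q = 0
  have h1 := h 1 zero_le_one 1 zero_le_one le_rfl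
  rw [ha, hb] at h1
  have hd : (1 : ℝ) + q * 1 ≠ 0 := by nlinarith
  field_simp at h1
  have hp : p = 0 := by nlinarith
  exact ⟨hp, by nlinarith⟩
end

section
/- Let p ∈ ℝ, q ≥ 0, t ≥ 0, and set ω = 1/(1+t). Define a = ω^{p/2}, c = ω^{-p/2}, b = ω^{p/2} · q/(1 + √(1+qt)), and d = −ω^{-p/2} · q/(1 + qt + √(1+qt)). Then: (i) a c = 1; (ii) a² = ω^p; (iii) c² ω^p = 1; (iv) a d + b(c + d t) = 0; (v) c b + d(a + b t) = 0; (vi) 2 a b + b² t = q a²; (vii) q d² t² + (d² + 2 c d q) t + 2 c d + c² q = 0. -/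
/-! With `s = √(1 + q t)` one has `s ≥ 1`, and the coefficients are `b = a κ`, `d = -c μ` with
`κ = q / (1 + s)` and `μ = q / (1 + q t + s)`. Since `1 + q t + s = s (1 + s)` and
`q t = (s - 1)(s + 1)`, these satisfy the polynomial relations `κ (1 + s) = q`, `μ s = κ` and
`κ t = s - 1`, from which (iv)–(vii) follow by ring arithmetic; (i)–(iii) are laws of
real powers of the positive number `ω`. -/

section RegularBranch

variable {R : Type*} [CommRing R] {q t s κ μ : R}

theorem two_mul_add_sq_mul_eq (hq : κ * (1 + s) = q) (ht : κ * t = s - 1) :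
    2 * κ + κ ^ 2 * t = q := by
  linear_combination κ * ht + hq

theorem mul_one_add_mul_eq (hμ : μ * s = κ) (ht : κ * t = s - 1) :
    μ * (1 + κ * t) = κ := by
  linear_combination μ * ht + hμ

theorem quartic_eq_zero (hq : κ * (1 + s) = q) (hμ : μ * s = κ) (ht : κ * t = s - 1) :
    q * μ ^ 2 * t ^ 2 + (μ ^ 2 - 2 * μ * q) * t - 2 * μ + q = 0 := by
  subst hq hμ
  linear_combination (μ ^ 2 * t * (1 + s) - 2 * μ * (1 + s) + μ * s) * ht

theorem regular_branch_identities (a c : R) (hq : κ * (1 + s) = q) (hμ : μ * s = κ)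
    (ht : κ * t = s - 1) :
    a * -(c * μ) + a * κ * (c + -(c * μ) * t) = 0 ∧
    c * (a * κ) + -(c * μ) * (a + a * κ * t) = 0 ∧
    2 * a * (a * κ) + (a * κ) ^ 2 * t = q * a ^ 2 ∧
    q * (-(c * μ)) ^ 2 * t ^ 2 + ((-(c * μ)) ^ 2 + 2 * c * -(c * μ) * q) * t + 2 * c * -(c * μ)
      + c ^ 2 * q = 0 := by
  have hμκ := mul_one_add_mul_eq hμ ht
  refine ⟨?_, ?_, ?_, ?_⟩
  · linear_combination -(a * c) * hμκ
  · linear_combination -(a * c) * hμκ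
  · linear_combination a ^ 2 * two_mul_add_sq_mul_eq hq ht
  · linear_combination c ^ 2 * quartic_eq_zero hq hμ ht

end RegularBranch

section SqrtRelations

variable {K : Type*} [Field K] {q t s : K}

theorem div_one_add_mul_eq_sub_one (hs : s ^ 2 = 1 + q * t) (h : 1 + s ≠ 0) :
    q / (1 + s) * t = s - 1 := by
  field_simp
  linear_combination -hs

theorem div_one_add_mul_add_mul_eq (hs : s ^ 2 = 1 + q * t) (h : 1 + s ≠ 0) (hs0 : s ≠ 0) :
    q / (1 + q * t + s) * s = q / (1 + s) := by
  rw [show 1 + q * t + s = s * (1 + s) by linear_combination -hs]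
  field_simp

end SqrtRelations

theorem Real.rpow_mul_rpow_neg {x : ℝ} (hx : 0 < x) (y : ℝ) : x ^ y * x ^ (-y) = 1 := by
  rw [Real.rpow_neg hx.le, mul_inv_cancel₀ (Real.rpow_pos_of_pos hx y).ne']

theorem Real.rpow_half_sq {x : ℝ} (hx : 0 ≤ x) (y : ℝ) : (x ^ (y / 2)) ^ 2 = x ^ y := by
  rw [← Real.rpow_mul_natCast hx]
  norm_num

theorem stmt_7 (p q t : ℝ) (hq : 0 ≤ q) (ht : 0 ≤ t) :
    let ω : ℝ := 1 / (1 + t)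
    let a : ℝ := ω ^ (p / 2)
    let c : ℝ := ω ^ (-(p / 2))
    let b : ℝ := ω ^ (p / 2) * (q / (1 + Real.sqrt (1 + q * t)))
    let d : ℝ := -(ω ^ (-(p / 2)) * (q / (1 + q * t + Real.sqrt (1 + q * t))))
    a * c = 1 ∧
    a ^ 2 = ω ^ p ∧
    c ^ 2 * ω ^ p = 1 ∧
    a * d + b * (c + d * t) = 0 ∧
    c * b + d * (a + b * t) = 0 ∧
    2 * a * b + b ^ 2 * t = q * a ^ 2 ∧
    q * d ^ 2 * t ^ 2 + (d ^ 2 + 2 * c * d * q) * t + 2 * c * d + c ^ 2 * q = 0 := by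
  intro ω a c b d
  have hω : 0 < ω := by positivity
  have hac : a * c = 1 := Real.rpow_mul_rpow_neg hω _
  have ha2 : a ^ 2 = ω ^ p := Real.rpow_half_sq hω.le p
  set s := Real.sqrt (1 + q * t)
  have hs : s ^ 2 = 1 + q * t := Real.sq_sqrt (by positivity)
  have hs1' : 1 + s ≠ 0 := by positivity
  refine ⟨hac, ha2, by rw [← ha2, ← mul_pow, mul_comm, hac, one_pow], ?_⟩
  exact regular_branch_identities a c (div_mul_cancel₀ q hs1')
    (div_one_add_mul_add_mul_eq hs hs1' (by positivity))
    (div_one_add_mul_eq_sub_one hs hs1')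
end

section
/- Let V be a real inner product space, θ ∈ V nonzero, q ≥ 0, p ∈ ℝ, ω = 1/(1+⟨θ,θ⟩). Suppose φ ∈ V satisfies ω^p (φ + q⟨φ,θ⟩θ) = −p ω^{p+1}(⟨ξ,θ⟩η + ⟨η,θ⟩ξ) − p q ω^{p+1} ⟨ξ,θ⟩⟨η,θ⟩θ + ω^p (pω + q)⟨ξ,η⟩θ for given ξ, η ∈ V. Then φ = −pω(⟨ξ,θ⟩η + ⟨η,θ⟩ξ) + (ν⟨ξ,θ⟩⟨η,θ⟩ + μ⟨ξ,η⟩)θ, where μ = (q+pω)/(q⟨θ,θ⟩+1) and ν = pqω/(q⟨θ,θ⟩+1). -/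
/-!
After cancelling `ω ^ p` (using `ω ^ (p + 1) = ω ^ p * ω`), the hypothesis reads
`φ + q ⟪φ, θ⟫ θ = ψ` with explicit `ψ`. Pairing with `θ` gives `(q ⟪θ, θ⟫ + 1) ⟪φ, θ⟫ = ⟪ψ, θ⟫`,
and `q ⟪θ, θ⟫ + 1 > 0` since `q ≥ 0`, so `φ = ψ - q ⟪ψ, θ⟫ / (q ⟪θ, θ⟫ + 1) θ`.
-/

theorem eq_sub_smul_of_add_smul_inner_eq {V : Type*} [NormedAddCommGroup V]
    [InnerProductSpace ℝ V] {q : ℝ} {θ φ ψ : V} (hq : q * inner ℝ θ θ + 1 ≠ 0)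
    (h : φ + (q * inner ℝ φ θ) • θ = ψ) :
    φ = ψ - (q * inner ℝ ψ θ / (q * inner ℝ θ θ + 1)) • θ := by
  have hφθ : inner ℝ φ θ = inner ℝ ψ θ / (q * inner ℝ θ θ + 1) := by
    rw [eq_div_iff hq, ← h, inner_add_left, real_inner_smul_left]
    ring
  rw [mul_div_assoc, ← hφθ, ← h, add_sub_cancel_right]

theorem stmt_13_general {V : Type*} [NormedAddCommGroup V] [InnerProductSpace ℝ V]
    (p q : ℝ) (hq : 0 ≤ q) (θ : V) (ξ η φ : V)
    (h : (((1 / (1 + (inner ℝ θ θ : ℝ))) ^ p : ℝ)) • (φ + (q * (inner ℝ φ θ : ℝ)) • θ) =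
        (-(p * (1 / (1 + (inner ℝ θ θ : ℝ))) ^ (p + 1))) •
            ((inner ℝ ξ θ : ℝ) • η + (inner ℝ η θ : ℝ) • ξ)
        + (-(p * q * (1 / (1 + (inner ℝ θ θ : ℝ))) ^ (p + 1) *
            (inner ℝ ξ θ : ℝ) * (inner ℝ η θ : ℝ))) • θ
        + (((1 / (1 + (inner ℝ θ θ : ℝ))) ^ p : ℝ) *
            (p * (1 / (1 + (inner ℝ θ θ : ℝ))) + q) * (inner ℝ ξ η : ℝ)) • θ) :
    φ = (-(p * (1 / (1 + (inner ℝ θ θ : ℝ))))) •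
          ((inner ℝ ξ θ : ℝ) • η + (inner ℝ η θ : ℝ) • ξ)
      + ((p * q * (1 / (1 + (inner ℝ θ θ : ℝ))) / (q * (inner ℝ θ θ : ℝ) + 1)) *
            (inner ℝ ξ θ : ℝ) * (inner ℝ η θ : ℝ)
          + ((q + p * (1 / (1 + (inner ℝ θ θ : ℝ)))) / (q * (inner ℝ θ θ : ℝ) + 1)) *
            (inner ℝ ξ η : ℝ)) • θ := by
  have ht : 0 ≤ inner ℝ θ θ := real_inner_self_nonneg
  set ω : ℝ := 1 / (1 + inner ℝ θ θ)
  have hω : 0 < ω := by positivity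
  have hqt : q * inner ℝ θ θ + 1 ≠ 0 := by positivity
  have hψ : φ + (q * inner ℝ φ θ) • θ =
      (-(p * ω)) • (inner ℝ ξ θ • η + inner ℝ η θ • ξ)
        + (-(p * q * ω * inner ℝ ξ θ * inner ℝ η θ) + (p * ω + q) * inner ℝ ξ η) • θ := by
    rw [Real.rpow_add_one hω.ne'] at h
    apply smul_right_injective V (Real.rpow_pos_of_pos hω p).ne'
    simp only [h, smul_add, smul_smul, add_smul]
    match_scalars <;> ring
  rw [eq_sub_smul_of_add_smul_inner_eq hqt hψ]
  simp only [inner_add_left, real_inner_smul_left]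
  match_scalars
  · ring
  · ring
  · field_simp
    ring

theorem stmt_13 {V : Type*} [NormedAddCommGroup V] [InnerProductSpace ℝ V]
    (p q : ℝ) (hq : 0 ≤ q) (θ : V) (hθ : θ ≠ 0) (ξ η φ : V)
    (h : (((1 / (1 + (inner ℝ θ θ : ℝ))) ^ p : ℝ)) • (φ + (q * (inner ℝ φ θ : ℝ)) • θ) =
        (-(p * (1 / (1 + (inner ℝ θ θ : ℝ))) ^ (p + 1))) •
            ((inner ℝ ξ θ : ℝ) • η + (inner ℝ η θ : ℝ) • ξ)
        + (-(p * q * (1 / (1 + (inner ℝ θ θ : ℝ))) ^ (p + 1) *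
            (inner ℝ ξ θ : ℝ) * (inner ℝ η θ : ℝ))) • θ
        + (((1 / (1 + (inner ℝ θ θ : ℝ))) ^ p : ℝ) *
            (p * (1 / (1 + (inner ℝ θ θ : ℝ))) + q) * (inner ℝ ξ η : ℝ)) • θ) :
    φ = (-(p * (1 / (1 + (inner ℝ θ θ : ℝ))))) •
          ((inner ℝ ξ θ : ℝ) • η + (inner ℝ η θ : ℝ) • ξ)
      + ((p * q * (1 / (1 + (inner ℝ θ θ : ℝ))) / (q * (inner ℝ θ θ : ℝ) + 1)) *
            (inner ℝ ξ θ : ℝ) * (inner ℝ η θ : ℝ)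
          + ((q + p * (1 / (1 + (inner ℝ θ θ : ℝ)))) / (q * (inner ℝ θ θ : ℝ) + 1)) *
            (inner ℝ ξ η : ℝ)) • θ :=
  stmt_13_general p q hq θ ξ η φ h
end

section
/- Let d' ≥ 2 be an integer and c₁, c₂ ∈ ℝ. Then there exist p ∈ ℝ and q ≥ 0 such that for all t ≥ 0: c₁ − c₂·t/(1+t)^p + (1+t)^{p−2}/(1+qt)² · P(t) > 0, where P(t) = α₀t³ + α₁t² + α₂t + α₃ with α₀ = (d'−2)q², α₁ = −q(6p + 2p² − 4q + d'(1 + 2p + 2q − p²)), α₂ = 2q(p+d') + q(d'−2)(2p+q) + p(d'−2)(2−p), α₃ = d'(2p+q). -/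
private lemma aux_le_rpow (t p : ℝ) (ht : 0 ≤ t) (hp : 1 ≤ p) : t ≤ (1 + t) ^ p := by
  have h1 : (1 + t) ^ (1:ℝ) ≤ (1 + t) ^ p :=
    Real.rpow_le_rpow_of_exponent_le (by linarith) hp
  rw [Real.rpow_one] at h1
  linarith

private lemma aux_one_le_rpow (t e : ℝ) (ht : 0 ≤ t) (he : 0 ≤ e) : 1 ≤ (1 + t) ^ e := by
  have h1 : (1 + t) ^ (0:ℝ) ≤ (1 + t) ^ e :=
    Real.rpow_le_rpow_of_exponent_le (by linarith) he
  rwa [Real.rpow_zero] at h1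

theorem stmt_14 (d' : ℕ) (hd' : 2 ≤ d') (c₁ c₂ : ℝ) :
    ∃ (p q : ℝ), 0 ≤ q ∧ ∀ t : ℝ, 0 ≤ t →
      0 < c₁ - c₂ * t / (1 + t) ^ p + (1 + t) ^ (p - 2) / (1 + q * t) ^ 2 *
        (((d' : ℝ) - 2) * q ^ 2 * t ^ 3
          + (-(q * (6 * p + 2 * p ^ 2 - 4 * q + (d' : ℝ) * (1 + 2 * p + 2 * q - p ^ 2)))) * t ^ 2
          + (2 * q * (p + (d' : ℝ)) + q * ((d' : ℝ) - 2) * (2 * p + q)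
              + p * ((d' : ℝ) - 2) * (2 - p)) * t
          + (d' : ℝ) * (2 * p + q)) := by
  have hc1 : -|c₁| ≤ c₁ := neg_abs_le c₁
  have hc2a : c₂ ≤ |c₂| := le_abs_self c₂
  have hc1n : 0 ≤ |c₁| := abs_nonneg c₁
  have hc2n : 0 ≤ |c₂| := abs_nonneg c₂
  rcases Nat.lt_or_ge d' 3 with hlt | hge
  · -- d' = 2, take q = 0
    have hd2 : d' = 2 := by omega
    subst hd2
    set p : ℝ := 2 + |c₁| + |c₂| with hpdef
    refine ⟨p, 0, le_refl 0, fun t ht => ?_⟩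
    have hp1 : (1:ℝ) ≤ p := by rw [hpdef]; linarith
    have hA : (0:ℝ) < (1 + t) ^ p := Real.rpow_pos_of_pos (by linarith) _
    have htA : t ≤ (1 + t) ^ p := aux_le_rpow t p ht hp1
    have hB : 1 ≤ (1 + t) ^ (p - 2) := aux_one_le_rpow t (p - 2) ht (by rw [hpdef]; linarith)
    have hc2' : c₂ * t / (1 + t) ^ p ≤ |c₂| := by
      rw [div_le_iff₀ hA]
      have s1 : c₂ * t ≤ |c₂| * t := mul_le_mul_of_nonneg_right hc2a ht
      have s2 : |c₂| * t ≤ |c₂| * ((1 + t) ^ p) := mul_le_mul_of_nonneg_left htA hc2n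
      linarith
    have hsimp : (((2:ℕ) : ℝ) - 2) * (0:ℝ) ^ 2 * t ^ 3
          + (-((0:ℝ) * (6 * p + 2 * p ^ 2 - 4 * 0 + ((2:ℕ) : ℝ) * (1 + 2 * p + 2 * 0 - p ^ 2)))) * t ^ 2
          + (2 * 0 * (p + ((2:ℕ) : ℝ)) + 0 * (((2:ℕ) : ℝ) - 2) * (2 * p + 0)
              + p * (((2:ℕ) : ℝ) - 2) * (2 - p)) * t
          + ((2:ℕ) : ℝ) * (2 * p + 0) = 4 * p := by push_cast; ring
    rw [hsimp]
    have hden : ((1:ℝ) + 0 * t) ^ 2 = 1 := by norm_num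
    rw [hden]
    have hp0 : (0:ℝ) < p := by linarith
    have hterm : 4 * p ≤ (1 + t) ^ (p - 2) / 1 * (4 * p) := by
      rw [div_one]
      have s1 := mul_le_mul_of_nonneg_right hB (by linarith : (0:ℝ) ≤ 4 * p)
      linarith
    have hfin : 0 < c₁ + 4 * p - |c₂| := by rw [hpdef]; linarith
    linarith
  · -- d' ≥ 3, take q = p large
    have hD : (3:ℝ) ≤ (d' : ℝ) := by exact_mod_cast hge
    set D : ℝ := (d' : ℝ) with hDdef
    set M : ℝ := 1 + |c₁| + |c₂| with hMdef
    have hM : 1 ≤ M := by rw [hMdef]; linarith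
    set p : ℝ := 4 * D + 3 + 2 * M with hpdef
    have hp0 : (0:ℝ) < p := by rw [hpdef]; linarith
    have hp1 : (1:ℝ) ≤ p := by rw [hpdef]; linarith
    have hp2 : (2:ℝ) ≤ p := by rw [hpdef]; linarith
    have hpval : p = 4 * D + 3 + 2 * M := hpdef
    refine ⟨p, p, le_of_lt hp0, fun t ht => ?_⟩
    have hA : (0:ℝ) < (1 + t) ^ p := Real.rpow_pos_of_pos (by linarith) _
    have htA : t ≤ (1 + t) ^ p := aux_le_rpow t p ht hp1
    have hB : 1 ≤ (1 + t) ^ (p - 2) := aux_one_le_rpow t (p - 2) ht (by linarith)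
    have hc2' : c₂ * t / (1 + t) ^ p ≤ |c₂| := by
      rw [div_le_iff₀ hA]
      have s1 : c₂ * t ≤ |c₂| * t := mul_le_mul_of_nonneg_right hc2a ht
      have s2 : |c₂| * t ≤ |c₂| * ((1 + t) ^ p) := mul_le_mul_of_nonneg_left htA hc2n
      linarith
    set Z : ℝ := (1 + p * t) ^ 2 with hZdef
    have hZpos : 0 < Z := by
      rw [hZdef]; positivity
    have hZle : Z ≤ 2 + 2 * p ^ 2 * t ^ 2 := by
      rw [hZdef]; nlinarith [sq_nonneg (p * t - 1)]
    set P : ℝ := (D - 2) * p ^ 2 * t ^ 3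
          + (-(p * (6 * p + 2 * p ^ 2 - 4 * p + D * (1 + 2 * p + 2 * p - p ^ 2)))) * t ^ 2
          + (2 * p * (p + D) + p * (D - 2) * (2 * p + p) + p * (D - 2) * (2 - p)) * t
          + D * (2 * p + p) with hPdef
    have hD2 : (0:ℝ) ≤ D - 2 := by linarith
    have ha0 : 0 ≤ (D - 2) * p ^ 2 * t ^ 3 :=
      mul_nonneg (mul_nonneg hD2 (sq_nonneg p)) (pow_nonneg ht 3)
    have key : 0 ≤ (D - 2) * p ^ 2 - (4 * D + 2) * p - D - 2 * M * p := by
      have h1 : (D - 2) * p ^ 2 - (4 * D + 2) * p - D - 2 * M * p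
          = (D - 3) * p ^ 2 + (p - D) := by rw [hpval]; ring
      rw [h1]
      have h2 : 0 ≤ (D - 3) * p ^ 2 := mul_nonneg (by linarith) (sq_nonneg p)
      have h3 : 0 ≤ p - D := by rw [hpval]; linarith
      linarith
    have ha1 : 2 * M * p ^ 2 ≤ -(p * (6 * p + 2 * p ^ 2 - 4 * p + D * (1 + 2 * p + 2 * p - p ^ 2))) := by
      have h1 : -(p * (6 * p + 2 * p ^ 2 - 4 * p + D * (1 + 2 * p + 2 * p - p ^ 2))) - 2 * M * p ^ 2
          = p * ((D - 2) * p ^ 2 - (4 * D + 2) * p - D - 2 * M * p) := by ring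
      have h2 : 0 ≤ p * ((D - 2) * p ^ 2 - (4 * D + 2) * p - D - 2 * M * p) :=
        mul_nonneg hp0.le key
      linarith
    have hcoef : 0 ≤ 2 * p * (p + D) + p * (D - 2) * (2 * p + p) + p * (D - 2) * (2 - p) := by
      have h1 : 2 * p * (p + D) + p * (D - 2) * (2 * p + p) + p * (D - 2) * (2 - p)
          = 2 * p ^ 2 + 2 * D * p + (D - 2) * (2 * p ^ 2 + 2 * p) := by ring
      rw [h1]
      have h2 : 0 ≤ (D - 2) * (2 * p ^ 2 + 2 * p) :=
        mul_nonneg hD2 (by linarith [sq_nonneg p])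
      have h3 : 0 ≤ D * p := mul_nonneg (by linarith) hp0.le
      linarith [sq_nonneg p]
    have ha2 : 0 ≤ (2 * p * (p + D) + p * (D - 2) * (2 * p + p) + p * (D - 2) * (2 - p)) * t :=
      mul_nonneg hcoef ht
    have ha3 : 2 * M ≤ D * (2 * p + p) := by
      have h1 : 0 ≤ (D - 3) * (2 * p + p) := mul_nonneg (by linarith) (by linarith)
      have h2 : 2 * M ≤ 3 * (2 * p + p) := by rw [hpval]; linarith
      linarith
    have hP : M * Z ≤ P := by
      rw [hPdef]
      have h1 := mul_le_mul_of_nonneg_right ha1 (sq_nonneg t)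
      have h2 := mul_le_mul_of_nonneg_left hZle (by linarith : (0:ℝ) ≤ M)
      linarith
    have hPn : 0 ≤ P := le_trans (by positivity) hP
    have hterm : M ≤ (1 + t) ^ (p - 2) / Z * P := by
      rw [div_mul_eq_mul_div, le_div_iff₀ hZpos]
      have s1 := mul_le_mul_of_nonneg_right hB hPn
      linarith
    have hMval : M = 1 + |c₁| + |c₂| := hMdef
    linarith
end
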